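/- Let Ex, En ∈ ℝ and He ≥ 0, and let μ be the cloud model CM(Ex, En, He). Then for every z ∈ ℝ, the modulus of the characteristic function of μ satisfies |Φ_μ(z)| = exp(−En²·z² / (2·(1 + z²·He²))) / √(1 + z²·He²); in particular |Φ_μ(z)| ≤ 1 / √(1 + z²·He²). -/

import Mathlib

/-!
Conditionally on the entropy sample `s`, the characteristic function is
`exp (i z Ex) * exp (-z² s² / 2)`. The phase has modulus one, so `|Φ(z)|` is the Gaussian
expectation `E[exp (-z² S² / 2)]` with `S ~ N(En, He²)`, which is computed by completing the square.
-/

open MeasureTheory ProbabilityTheory Real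

/-- The characteristic function of a measure on `ℝ`, `Φ_μ(z) = ∫ exp(i z x) dμ(x)`. -/
noncomputable def charFunReal (μ : Measure ℝ) (z : ℝ) : ℂ :=
  ∫ x, Complex.exp (Complex.I * z * x) ∂μ

/-- The cloud model `CM(Ex, En, He)`: the mixture obtained by drawing `S ~ N(En, He²)`
and then `X | S = s ~ N(Ex, s²)`. -/
noncomputable def cloudModel (Ex En He : ℝ) : Measure ℝ :=
  (gaussianReal En ⟨He ^ 2, sq_nonneg He⟩).bind
    fun s => gaussianReal Ex ⟨s ^ 2, sq_nonneg s⟩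

open Complex
open scoped NNReal

theorem integral_exp_neg_quadratic {b : ℝ} (hb : 0 < b) (c d : ℝ) :
    ∫ x, rexp (-b * x ^ 2 + c * x + d) = √(π / b) * rexp (d + c ^ 2 / (4 * b)) := by
  have hsq (x : ℝ) :
      -b * x ^ 2 + c * x + d = -b * (x - c / (2 * b)) ^ 2 + (d + c ^ 2 / (4 * b)) := by
    field_simp
    ring
  simp_rw [hsq, Real.exp_add, integral_mul_const,
    integral_sub_right_eq_self (fun x => rexp (-b * x ^ 2)), integral_gaussian]

theorem integral_exp_neg_mul_sq_gaussianReal (m : ℝ) (v : ℝ≥0) {a : ℝ} (h : 0 < 1 + a * v) :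
    ∫ s, rexp (-(a * s ^ 2) / 2) ∂gaussianReal m v =
      rexp (-(m ^ 2 * a) / (2 * (1 + a * v))) / √(1 + a * v) := by
  rcases eq_or_ne v 0 with rfl | hv
  · simp only [gaussianReal_zero_var, integral_dirac, NNReal.coe_zero, mul_zero, add_zero,
      Real.sqrt_one, div_one]
    ring_nf
  have hv' : (0 : ℝ) < v := by positivity
  calc ∫ s, rexp (-(a * s ^ 2) / 2) ∂gaussianReal m v
      = ∫ s, (√(2 * π * v))⁻¹ *
          rexp (-((1 + a * v) / (2 * v)) * s ^ 2 + m / v * s + -m ^ 2 / (2 * v)) := by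
        rw [integral_gaussianReal_eq_integral_smul hv]
        congr with s
        rw [gaussianPDFReal, smul_eq_mul, mul_assoc, ← Real.exp_add]
        congr 2
        field_simp
        ring
    _ = (√(2 * π * v))⁻¹ * (√(π / ((1 + a * v) / (2 * v))) *
          rexp (-m ^ 2 / (2 * v) + (m / v) ^ 2 / (4 * ((1 + a * v) / (2 * v))))) := by
        rw [integral_const_mul, integral_exp_neg_quadratic (by positivity)]
    _ = rexp (-(m ^ 2 * a) / (2 * (1 + a * v))) / √(1 + a * v) := by
        have hπ : π / ((1 + a * v) / (2 * v)) = 2 * π * v / (1 + a * v) := by field_simp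
        have hexp : -m ^ 2 / (2 * v) + (m / v) ^ 2 / (4 * ((1 + a * v) / (2 * v))) =
            -(m ^ 2 * a) / (2 * (1 + a * v)) := by
          -- `field_simp` looks for the denominator in its normal form `1 + v * a`
          have : 1 + v * a ≠ 0 := by linarith
          field_simp
          ring
        rw [hπ, hexp, Real.sqrt_div (by positivity)]
        field_simp

theorem charFun_comp {α E : Type*} [MeasurableSpace α] [NormedAddCommGroup E]
    [InnerProductSpace ℝ E] [MeasurableSpace E] [BorelSpace E] (μ : Measure α) [IsFiniteMeasure μ]
    (κ : Kernel α E) [IsFiniteKernel κ] (t : E) :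
    charFun (κ ∘ₘ μ) t = ∫ a, charFun (κ a) t ∂μ := by
  have h := Kernel.integral_comp (a := ()) (κ := Kernel.const Unit μ) (η := κ)
    ((BoundedContinuousFunction.innerProbChar t).integrable _)
  rw [← Measure.comp_eq_comp_const_apply] at h
  simpa [charFun_apply, BoundedContinuousFunction.innerProbChar_apply] using h

noncomputable def gaussianStdDevKernel (m : ℝ) : Kernel ℝ ℝ where
  toFun s := gaussianReal m ⟨s ^ 2, sq_nonneg s⟩
  measurable' := measurable_gaussianReal.comp (measurable_const.prodMk (by fun_prop))

instance (m : ℝ) : IsMarkovKernel (gaussianStdDevKernel m) :=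
  ⟨fun _ => instIsProbabilityMeasureGaussianReal _ _⟩

theorem charFun_comp_gaussianStdDevKernel (m : ℝ) (ν : Measure ℝ) [IsFiniteMeasure ν] (z : ℝ) :
    charFun (gaussianStdDevKernel m ∘ₘ ν) z =
      cexp (z * m * I) * ↑(∫ s, rexp (-(z ^ 2 * s ^ 2) / 2) ∂ν) := by
  have hkernel (s : ℝ) : charFun (gaussianStdDevKernel m s) z =
      cexp (z * m * I) * ↑(rexp (-(z ^ 2 * s ^ 2) / 2)) := by
    refine (charFun_gaussianReal z).trans ?_
    rw [ofReal_exp, ← Complex.exp_add]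
    congr 1
    -- the variance `⟨s ^ 2, _⟩` has the bare subtype as its type, so `rw` does not see an `ℝ≥0`
    erw [NNReal.coe_mk]
    push_cast
    ring
  simp_rw [charFun_comp, hkernel, integral_const_mul, integral_complex_ofReal]

theorem norm_charFun_comp_gaussianStdDevKernel (m : ℝ) (ν : Measure ℝ) [IsFiniteMeasure ν]
    (z : ℝ) :
    ‖charFun (gaussianStdDevKernel m ∘ₘ ν) z‖ = ∫ s, rexp (-(z ^ 2 * s ^ 2) / 2) ∂ν := by
  rw [charFun_comp_gaussianStdDevKernel, norm_mul, ← ofReal_mul, norm_exp_ofReal_mul_I, one_mul,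
    Complex.norm_of_nonneg (integral_nonneg fun _ => (Real.exp_pos _).le)]

theorem norm_charFun_comp_gaussianReal (m μ : ℝ) (v : ℝ≥0) (z : ℝ) :
    ‖charFun (gaussianStdDevKernel m ∘ₘ gaussianReal μ v) z‖ =
      rexp (-(μ ^ 2 * z ^ 2) / (2 * (1 + z ^ 2 * v))) / √(1 + z ^ 2 * v) := by
  rw [norm_charFun_comp_gaussianStdDevKernel,
    integral_exp_neg_mul_sq_gaussianReal μ v (by positivity)]

theorem charFunReal_eq_charFun (μ : Measure ℝ) (z : ℝ) : charFunReal μ z = charFun μ z := by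
  rw [charFunReal, charFun_apply_real]
  congr with x
  ring_nf

theorem cloudModel_eq_comp (Ex En He : ℝ) :
    cloudModel Ex En He = gaussianStdDevKernel Ex ∘ₘ gaussianReal En ⟨He ^ 2, sq_nonneg He⟩ :=
  rfl

theorem cloudModel_charFun_abs_general (Ex En He : ℝ) (z : ℝ) :
    ‖charFunReal (cloudModel Ex En He) z‖ =
        Real.exp (-(En ^ 2 * z ^ 2) / (2 * (1 + z ^ 2 * He ^ 2))) /
          Real.sqrt (1 + z ^ 2 * He ^ 2) ∧
      ‖charFunReal (cloudModel Ex En He) z‖ ≤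
        1 / Real.sqrt (1 + z ^ 2 * He ^ 2) := by
  have hnorm : ‖charFunReal (cloudModel Ex En He) z‖ =
      Real.exp (-(En ^ 2 * z ^ 2) / (2 * (1 + z ^ 2 * He ^ 2))) /
        Real.sqrt (1 + z ^ 2 * He ^ 2) := by
    rw [charFunReal_eq_charFun, cloudModel_eq_comp]
    exact norm_charFun_comp_gaussianReal Ex En ⟨He ^ 2, sq_nonneg He⟩ z
  refine ⟨hnorm, hnorm ▸ div_le_div_of_nonneg_right ?_ (Real.sqrt_nonneg _)⟩
  exact Real.exp_le_one_iff.mpr (div_nonpos_of_nonpos_of_nonneg (by nlinarith) (by positivity))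

theorem cloudModel_charFun_abs (Ex En He : ℝ) (hHe : 0 ≤ He) (z : ℝ) :
    ‖charFunReal (cloudModel Ex En He) z‖ =
        Real.exp (-(En ^ 2 * z ^ 2) / (2 * (1 + z ^ 2 * He ^ 2))) /
          Real.sqrt (1 + z ^ 2 * He ^ 2) ∧
      ‖charFunReal (cloudModel Ex En He) z‖ ≤
        1 / Real.sqrt (1 + z ^ 2 * He ^ 2) :=
  cloudModel_charFun_abs_general Ex En He z
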